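/- Let μ be a finite Borel measure on ℂ^n whose support K = supp(μ) is compact and has the property that for every z ∈ K there exists ρ(z) > 0 such that for all 0 < r ≤ ρ(z) the compact set K ∩ B̄(z,r) is regular. Suppose μ satisfies the mass density condition: there exist r₀ > 0 and T > 0 such that μ(B(z,r)) ≥ r^T for all z ∈ K and all 0 < r < r₀. Then μ is a strong Bernstein–Markov measure for K, i.e., for every continuous function Q : K → ℝ the triple (K, μ, Q) satisfies the weighted Bernstein–Markov property. -/

import Mathlib

/-!
Fix `ε > 0` and put `η = log (1 + ε) / (1 + T)`. Given `p` of degree at most `k`, let `z₀ ∈ K`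
maximise `|p| e^{-kQ}` on `K`. On a regular slice `E` of `K` near `z₀`, where `Q` varies by less
than `η`, this gives `|p| ≤ |p(z₀)| e^{kη}`; as `V_E < η` near `z₀`, Bernstein–Walsh bounds `|p|`
by `|p(z₀)| e^{2kη}` on a ball of radius `R` about `z₀`, and a Cauchy estimate keeps
`|p| ≥ |p(z₀)| / 2` on the concentric ball of radius `≈ R e^{-2kη}`. By the mass density
condition that ball has mass `≳ e^{-2kηT}`, so the weighted `L²` norm of `p` is at least a constant
times `|p(z₀)| e^{-kQ(z₀)} e^{-kη(1+T)} = |p(z₀)| e^{-kQ(z₀)} (1 + ε)^{-k}`. The Lebesgue number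
lemma makes `R` independent of `z₀`.
-/

open MeasureTheory

variable {n : ℕ}

/-- The defining family for the extremal function of `E ⊆ ℂ^n`. -/
def extremalSet (E : Set (EuclideanSpace ℂ (Fin n))) (z : EuclideanSpace ℂ (Fin n)) :
    Set ℝ :=
  {v | ∃ p : MvPolynomial (Fin n) ℂ, 0 < p.totalDegree ∧
    (∀ w ∈ E, ‖MvPolynomial.eval (fun i => w i) p‖ ≤ 1) ∧
    v = (p.totalDegree : ℝ)⁻¹ * Real.log ‖MvPolynomial.eval (fun i => z i) p‖}

/-- The extremal function `V_E(z) = sup { (1/deg p) log |p(z)| }`. -/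
noncomputable def extremalFunction (E : Set (EuclideanSpace ℂ (Fin n)))
    (z : EuclideanSpace ℂ (Fin n)) : ℝ :=
  sSup (extremalSet E z)

/-- A compact set `E ⊆ ℂ^n` is regular if its extremal function `V_E` is finite-valued
and continuous on `ℂ^n`. -/
def RegularSet (E : Set (EuclideanSpace ℂ (Fin n))) : Prop :=
  (∀ z, BddAbove (extremalSet E z)) ∧ Continuous (extremalFunction E)

open Metric Filter Topology

theorem MvPolynomial.differentiable_eval_euclideanSpace (p : MvPolynomial (Fin n) ℂ) :
    Differentiable ℂ (fun z : EuclideanSpace ℂ (Fin n) => MvPolynomial.eval (fun i => z i) p) :=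
  fun z => ((AnalyticOnNhd.eval_continuousLinearMap
    (PiLp.continuousLinearEquiv 2 ℂ (fun _ : Fin n => ℂ)).toContinuousLinearMap p) z
      trivial).differentiableAt

theorem MvPolynomial.totalDegree_smul_of_ne_zero {σ 𝕜 : Type*} [Field 𝕜] {a : 𝕜} (ha : a ≠ 0)
    (p : MvPolynomial σ 𝕜) : (a • p).totalDegree = p.totalDegree := by
  refine le_antisymm (MvPolynomial.totalDegree_smul_le a p) ?_
  simpa [smul_smul, ha] using MvPolynomial.totalDegree_smul_le a⁻¹ (a • p)

theorem Complex.dist_le_two_mul_div_mul_dist_of_norm_le {V F : Type*} [NormedAddCommGroup V]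
    [NormedSpace ℂ V] [NormedAddCommGroup F] [NormedSpace ℂ F] {f : V → F} {c u : V} {R B : ℝ}
    (hf : DifferentiableOn ℂ f (ball c R)) (hB : ∀ w ∈ ball c R, ‖f w‖ ≤ B)
    (hu : u ∈ ball c R) : dist (f u) (f c) ≤ 2 * B / R * dist u c := by
  rcases eq_or_ne u c with rfl | huc
  · simp
  have hd : 0 < dist u c := dist_pos.mpr huc
  set line : ℂ → V := fun t => c + t • (u - c)
  have hline : Set.MapsTo line (ball 0 (R / dist u c)) (ball c R) := fun t ht => by
    rw [mem_ball_zero_iff, lt_div_iff₀ hd] at ht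
    simpa [line, norm_smul, dist_eq_norm] using ht
  have hmaps : Set.MapsTo (f ∘ line) (ball 0 (R / dist u c)) (closedBall (f (line 0)) (2 * B)) :=
    fun t ht => by
      have h0 : (0 : ℂ) ∈ ball 0 (R / dist u c) := mem_ball_self (pos_of_mem_ball ht)
      rw [mem_closedBall, two_mul]
      exact (dist_le_norm_add_norm _ _).trans (add_le_add (hB _ (hline ht)) (hB _ (hline h0)))
  have h1 : (1 : ℂ) ∈ ball 0 (R / dist u c) := by
    rw [mem_ball_zero_iff, norm_one, one_lt_div hd]; exact hu
  have := Complex.dist_le_div_mul_dist_of_mapsTo_ball (hf.comp (by fun_prop) hline) hmaps h1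
  simp only [Function.comp_apply, line, one_smul, zero_smul, add_zero, add_sub_cancel,
    dist_zero_right, norm_one, mul_one] at this
  rwa [div_div_eq_mul_div, mul_div_right_comm] at this

theorem le_mul_exp_of_isMaxOn_mul_exp_neg_pow {X : Type*} {K : Set X} {f Q : X → ℝ} {k : ℕ}
    {x y : X} {η : ℝ} (hmax : IsMaxOn (fun u => f u * Real.exp (-Q u) ^ k) K x) (hy : y ∈ K)
    (hfx : 0 ≤ f x) (hQ : Q y ≤ Q x + η) : f y ≤ f x * Real.exp (k * η) := by
  have h : f y * Real.exp (k * -Q y) ≤ f x * Real.exp (k * -Q x) := by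
    simpa only [Real.exp_nat_mul] using isMaxOn_iff.mp hmax y hy
  calc f y = f y * Real.exp (k * -Q y) * Real.exp (k * Q y) := by
        rw [mul_assoc, ← Real.exp_add]; simp
    _ ≤ f x * Real.exp (k * -Q x) * Real.exp (k * Q y) := by gcongr
    _ = f x * Real.exp (k * (Q y - Q x)) := by rw [mul_assoc, ← Real.exp_add]; ring_nf
    _ ≤ f x * Real.exp (k * η) := by gcongr; linarith

section Extremal

variable {E : Set (EuclideanSpace ℂ (Fin n))}

theorem extremalFunction_nonpos {z : EuclideanSpace ℂ (Fin n)} (hz : z ∈ E) :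
    extremalFunction E z ≤ 0 := by
  refine Real.sSup_nonpos fun v ⟨p, _, hp, hv⟩ => hv ▸ ?_
  exact mul_nonpos_of_nonneg_of_nonpos (by positivity) (Real.log_nonpos (norm_nonneg _) (hp z hz))

theorem RegularSet.eventually_extremalFunction_lt (hE : RegularSet E)
    {z : EuclideanSpace ℂ (Fin n)} (hz : z ∈ E) {η : ℝ} (hη : 0 < η) :
    ∀ᶠ w in 𝓝 z, extremalFunction E w < η :=
  hE.2.continuousAt.eventually_lt continuousAt_const ((extremalFunction_nonpos hz).trans_lt hη)

/-- The Bernstein–Walsh inequality. -/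
theorem norm_eval_le_mul_exp_extremalFunction (hE : ∀ z, BddAbove (extremalSet E z))
    {p : MvPolynomial (Fin n) ℂ} (hp : 0 < p.totalDegree) {M : ℝ} (hM : 0 < M)
    (hpE : ∀ y ∈ E, ‖MvPolynomial.eval (fun i => y i) p‖ ≤ M) (z : EuclideanSpace ℂ (Fin n)) :
    ‖MvPolynomial.eval (fun i => z i) p‖ ≤
      M * Real.exp (p.totalDegree * extremalFunction E z) := by
  set q := ((M : ℂ)⁻¹) • p
  have hMC : (M : ℂ) ≠ 0 := by exact_mod_cast hM.ne'
  have hq : ∀ w : EuclideanSpace ℂ (Fin n),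
      ‖MvPolynomial.eval (fun i => w i) q‖ = ‖MvPolynomial.eval (fun i => w i) p‖ / M := by
    intro w
    simp [q, norm_inv, abs_of_pos hM, div_eq_inv_mul]
  have hdeg : q.totalDegree = p.totalDegree :=
    MvPolynomial.totalDegree_smul_of_ne_zero (inv_ne_zero hMC) p
  rcases eq_or_ne (MvPolynomial.eval (fun i => z i) p) 0 with h0 | h0
  · rw [h0, norm_zero]; positivity
  have hmem : (p.totalDegree : ℝ)⁻¹ * Real.log ‖MvPolynomial.eval (fun i => z i) q‖ ∈
      extremalSet E z :=
    ⟨q, hdeg ▸ hp, fun y hy => by rw [hq, div_le_one hM]; exact hpE y hy, by rw [hdeg]⟩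
  have hlog := le_csSup (hE z) hmem
  rw [inv_mul_le_iff₀ (by exact_mod_cast hp), hq, Real.log_div (norm_ne_zero_iff.mpr h0) hM.ne',
    sub_le_iff_le_add', ← Real.exp_le_exp, Real.exp_log (norm_pos_iff.mpr h0), Real.exp_add,
    Real.exp_log hM] at hlog
  exact hlog

theorem norm_eval_le_mul_exp_of_extremalFunction_le (hE : ∀ z, BddAbove (extremalSet E z))
    (hne : E.Nonempty) {p : MvPolynomial (Fin n) ℂ} {k : ℕ} (hp : p.totalDegree ≤ k)
    {M η : ℝ} (hM : 0 < M) (hη : 0 ≤ η)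
    (hpE : ∀ y ∈ E, ‖MvPolynomial.eval (fun i => y i) p‖ ≤ M) {w : EuclideanSpace ℂ (Fin n)}
    (hw : extremalFunction E w ≤ η) :
    ‖MvPolynomial.eval (fun i => w i) p‖ ≤ M * Real.exp (k * η) := by
  rcases Nat.eq_zero_or_pos p.totalDegree with h0 | hpos
  · obtain ⟨y, hy⟩ := hne
    rw [MvPolynomial.totalDegree_eq_zero_iff_eq_C] at h0
    have hc := hpE y hy
    rw [h0, MvPolynomial.eval_C] at hc ⊢
    exact hc.trans (le_mul_of_one_le_right hM.le (Real.one_le_exp (by positivity)))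
  refine (norm_eval_le_mul_exp_extremalFunction hE hpos hM hpE w).trans
    (mul_le_mul_of_nonneg_left (Real.exp_le_exp.mpr ?_) hM.le)
  calc (p.totalDegree : ℝ) * extremalFunction E w ≤ p.totalDegree * η := by gcongr
    _ ≤ k * η := by gcongr

end Extremal

theorem exists_uniform_regular_slices {K : Set (EuclideanSpace ℂ (Fin n))} (hK : IsCompact K)
    (hloc : ∀ z ∈ K, ∃ ρ : ℝ, 0 < ρ ∧ ∀ r : ℝ, 0 < r → r ≤ ρ →
      RegularSet (K ∩ closedBall z r))
    {s η : ℝ} (hs : 0 < s) (hη : 0 < η) :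
    ∃ R > 0, ∀ x ∈ K, ∃ E ⊆ K ∩ ball x s, x ∈ E ∧ RegularSet E ∧
      ∀ w ∈ ball x R, extremalFunction E w < η := by
  have hslice : ∀ z : K, ∃ r > 0, r ≤ s / 2 ∧
      RegularSet (K ∩ closedBall (z : EuclideanSpace ℂ (Fin n)) r) ∧ ∃ t > 0, t ≤ r ∧
        ∀ w ∈ ball (z : EuclideanSpace ℂ (Fin n)) t,
          extremalFunction (K ∩ closedBall (z : EuclideanSpace ℂ (Fin n)) r) w < η := by
    rintro ⟨z, hz⟩
    obtain ⟨ρ, hρ, hreg⟩ := hloc z hz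
    have hr : 0 < min ρ (s / 2) := by positivity
    have hE := hreg _ hr (min_le_left _ _)
    obtain ⟨t, ht, hV⟩ := eventually_nhds_iff_ball.mp
      (hE.eventually_extremalFunction_lt ⟨hz, mem_closedBall_self hr.le⟩ hη)
    exact ⟨_, hr, min_le_right _ _, hE, min t (min ρ (s / 2)), by positivity, min_le_right _ _,
      fun w hw => hV w (ball_subset_ball (min_le_left _ _) hw)⟩
  choose r hr hrs hreg t ht htr hV using hslice
  obtain ⟨R, hR, hcover⟩ := lebesgue_number_lemma_of_metric hK
    (c := fun z : K => ball (z : EuclideanSpace ℂ (Fin n)) (t z)) (fun _ => isOpen_ball)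
    (fun x hx => Set.mem_iUnion.mpr ⟨⟨x, hx⟩, mem_ball_self (ht _)⟩)
  refine ⟨R, hR, fun x hx => ?_⟩
  obtain ⟨i, hi⟩ := hcover x hx
  have hxi : dist x i < t i := hi (mem_ball_self hR)
  refine ⟨K ∩ closedBall (i : EuclideanSpace ℂ (Fin n)) (r i), fun y ⟨hyK, hyi⟩ => ⟨hyK, ?_⟩,
    ⟨hx, (htr i).trans' hxi.le⟩, hreg i, fun w hw => hV i w (hi hw)⟩
  rw [mem_closedBall] at hyi
  rw [mem_ball]
  linarith [dist_triangle_right y x i, hrs i, htr i]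

theorem half_norm_eval_le_of_isMaxOn {K E : Set (EuclideanSpace ℂ (Fin n))}
    {Q : EuclideanSpace ℂ (Fin n) → ℝ} {p : MvPolynomial (Fin n) ℂ} {k : ℕ}
    {z₀ u : EuclideanSpace ℂ (Fin n)} {η R : ℝ} (hp : p.totalDegree ≤ k) (hη : 0 ≤ η)
    (hmax : IsMaxOn (fun z => ‖MvPolynomial.eval (fun i => z i) p‖ * Real.exp (-Q z) ^ k) K z₀)
    (hEK : E ⊆ K) (hz₀E : z₀ ∈ E) (hE : ∀ z, BddAbove (extremalSet E z))
    (hQE : ∀ y ∈ E, Q y ≤ Q z₀ + η) (hV : ∀ w ∈ ball z₀ R, extremalFunction E w ≤ η)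
    (hu : dist u z₀ < R * Real.exp (-(2 * k * η)) / 4) :
    ‖MvPolynomial.eval (fun i => z₀ i) p‖ / 2 ≤ ‖MvPolynomial.eval (fun i => u i) p‖ := by
  set N := ‖MvPolynomial.eval (fun i => z₀ i) p‖
  rcases (norm_nonneg _ : 0 ≤ N).eq_or_lt with hN | hN
  · rw [show N = 0 from hN.symm, zero_div]; exact norm_nonneg _
  have hexp_le : Real.exp (-(2 * k * η)) ≤ 1 :=
    Real.exp_le_one_iff.mpr (by simp only [neg_nonpos]; positivity)
  have hR : 0 < R := by
    by_contra! hR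
    have : R * Real.exp (-(2 * k * η)) ≤ 0 := mul_nonpos_of_nonpos_of_nonneg hR (by positivity)
    linarith [dist_nonneg (x := u) (y := z₀)]
  have huR : u ∈ ball z₀ R := mem_ball.mpr (hu.trans_le (by nlinarith))
  have hpE : ∀ y ∈ E, ‖MvPolynomial.eval (fun i => y i) p‖ ≤ N * Real.exp (k * η) :=
    fun y hy => le_mul_exp_of_isMaxOn_mul_exp_neg_pow (x := z₀) (y := y) hmax (hEK hy)
      (norm_nonneg _) (hQE y hy)
  have hB : ∀ w ∈ ball z₀ R,
      ‖MvPolynomial.eval (fun i => w i) p‖ ≤ N * Real.exp (k * η) * Real.exp (k * η) :=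
    fun w hw => norm_eval_le_mul_exp_of_extremalFunction_le hE ⟨z₀, hz₀E⟩ hp (by positivity) hη
      hpE (hV w hw)
  have hclose := Complex.dist_le_two_mul_div_mul_dist_of_norm_le
    (MvPolynomial.differentiable_eval_euclideanSpace p).differentiableOn hB huR
  have hsmall : 2 * (N * Real.exp (k * η) * Real.exp (k * η)) / R * dist u z₀ ≤ N / 2 := by
    calc _ ≤ 2 * (N * Real.exp (k * η) * Real.exp (k * η)) / R *
          (R * Real.exp (-(2 * k * η)) / 4) := by gcongr
      _ = N / 2 * Real.exp (k * η + k * η + -(2 * k * η)) := by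
          rw [Real.exp_add, Real.exp_add]; field_simp; ring
      _ = N / 2 := by ring_nf; rw [Real.exp_zero, mul_one]
  have := norm_sub_norm_le (MvPolynomial.eval (fun i => z₀ i) p)
    (MvPolynomial.eval (fun i => u i) p)
  rw [← dist_eq_norm, dist_comm] at this
  linarith

theorem half_mul_exp_le_of_isMaxOn {K E : Set (EuclideanSpace ℂ (Fin n))}
    {Q : EuclideanSpace ℂ (Fin n) → ℝ} {p : MvPolynomial (Fin n) ℂ} {k : ℕ}
    {z₀ u : EuclideanSpace ℂ (Fin n)} {η δ R : ℝ} (hp : p.totalDegree ≤ k) (hη : 0 ≤ η)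
    (hmax : IsMaxOn (fun z => ‖MvPolynomial.eval (fun i => z i) p‖ * Real.exp (-Q z) ^ k) K z₀)
    (hQ : ∀ y ∈ K, dist y z₀ < δ → Q y ≤ Q z₀ + η)
    (hEK : E ⊆ K ∩ ball z₀ δ) (hz₀E : z₀ ∈ E) (hE : ∀ z, BddAbove (extremalSet E z))
    (hV : ∀ w ∈ ball z₀ R, extremalFunction E w ≤ η) (hu : u ∈ K) (huδ : dist u z₀ < δ)
    (huR : dist u z₀ < R * Real.exp (-(2 * k * η)) / 4) :
    ‖MvPolynomial.eval (fun i => z₀ i) p‖ / 2 * Real.exp (-(Q z₀ + η)) ^ k ≤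
      ‖MvPolynomial.eval (fun i => u i) p‖ * Real.exp (-Q u) ^ k := by
  have hhalf := half_norm_eval_le_of_isMaxOn hp hη hmax (hEK.trans Set.inter_subset_left) hz₀E
    hE (fun y hy => hQ y (hEK hy).1 (hEK hy).2) hV huR
  have hweight : Real.exp (-(Q z₀ + η)) ≤ Real.exp (-Q u) :=
    Real.exp_le_exp.mpr (neg_le_neg (hQ u hu huδ))
  gcongr

variable [MeasurableSpace (EuclideanSpace ℂ (Fin n))]
  [BorelSpace (EuclideanSpace ℂ (Fin n))]

/-- `(K, ν, Q)` satisfies the weighted Bernstein–Markov property (with `w = e^{-Q}`). -/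
def WeightedBernsteinMarkov (K : Set (EuclideanSpace ℂ (Fin n)))
    (ν : Measure (EuclideanSpace ℂ (Fin n))) (Q : EuclideanSpace ℂ (Fin n) → ℝ) : Prop :=
  ∀ ε : ℝ, 0 < ε → ∃ C : ℝ, 0 < C ∧ ∀ k : ℕ, 1 ≤ k → ∀ p : MvPolynomial (Fin n) ℂ,
    p.totalDegree ≤ k → ∀ z ∈ K,
      ‖MvPolynomial.eval (fun i => z i) p‖ * Real.exp (-Q z) ^ k ≤ C * (1 + ε) ^ k *
        Real.sqrt (∫ w in K, ‖MvPolynomial.eval (fun i => w i) p‖ ^ 2 *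
          Real.exp (-Q w) ^ (2 * k) ∂ν)

theorem rpow_le_measureReal_inter_ball {X : Type*} [PseudoMetricSpace X] [MeasurableSpace X]
    [HereditarilyLindelofSpace X] {μ : Measure X} [IsFiniteMeasure μ] {K : Set X}
    (hK : ∀ z, z ∈ K ↔ ∀ r : ℝ, 0 < r → 0 < μ (ball z r)) {z : X} {r T : ℝ}
    (hmass : ENNReal.ofReal (r ^ T) ≤ μ (ball z r)) : r ^ T ≤ μ.real (K ∩ ball z r) := by
  have hsupp : K = μ.support :=
    Set.ext fun z => (hK z).trans nhds_basis_ball.mem_measureSupport.symm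
  rw [Set.inter_comm, measureReal_def, measure_inter_conull (hsupp ▸ Measure.measure_compl_support)]
  exact (ENNReal.ofReal_le_iff_le_toReal (measure_ne_top _ _)).mp hmass

theorem mul_sqrt_measureReal_le_sqrt_setIntegral {X : Type*} [MeasurableSpace X]
    {μ : Measure X} {f : X → ℝ} {s t : Set X} (hs : MeasurableSet s) (ht : MeasurableSet t)
    (hts : t ⊆ s) (hμt : μ t ≠ ⊤) (hf : IntegrableOn f s μ) (hf0 : ∀ x ∈ s, 0 ≤ f x)
    {a : ℝ} (ha : 0 ≤ a) (haf : ∀ x ∈ t, a ^ 2 ≤ f x) :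
    a * √(μ.real t) ≤ √(∫ x in s, f x ∂μ) := by
  rw [← Real.sqrt_sq ha, ← Real.sqrt_mul (sq_nonneg a)]
  refine Real.sqrt_le_sqrt ?_
  calc a ^ 2 * μ.real t = μ.real t • a ^ 2 := mul_comm _ _
    _ ≤ ∫ x in t, f x ∂μ := setIntegral_ge_of_const_le ht hμt haf (hf.mono_set hts)
    _ ≤ ∫ x in s, f x ∂μ := setIntegral_mono_set hf (ae_restrict_of_forall_mem hs hf0)
        (Eventually.of_forall hts)

/-- The factor `e^{kη(1+T)} = (1 + ε)^k` exactly compensates the loss `e^{-kη}` in the weight and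
the loss `e^{-kηT}` in the mass of the ball of radius `β e^{-2kη}`. -/
theorem two_div_sqrt_rpow_mul_pow_mul_eq {N a β T η : ℝ} (k : ℕ) (hβ : 0 < β) :
    2 / √(β ^ T) * Real.exp (η * (1 + T)) ^ k *
        (N / 2 * Real.exp (-(a + η)) ^ k * √((β * Real.exp (-(2 * k * η))) ^ T)) =
      N * Real.exp (-a) ^ k := by
  have hsqrt : √((β * Real.exp (-(2 * k * η))) ^ T) = √(β ^ T) * Real.exp (-(k * η * T)) := by
    rw [Real.mul_rpow hβ.le (Real.exp_pos _).le, ← Real.exp_mul,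
      Real.sqrt_mul' _ (Real.exp_pos _).le, ← Real.exp_half]
    ring_nf
  have hexp : Real.exp (k * (η * (1 + T))) * Real.exp (k * -(a + η)) * Real.exp (-(k * η * T)) =
      Real.exp (k * -a) := by
    rw [← Real.exp_add, ← Real.exp_add]; ring_nf
  have hpos : 0 < √(β ^ T) := Real.sqrt_pos.mpr (Real.rpow_pos_of_pos hβ T)
  rw [hsqrt, ← Real.exp_nat_mul, ← Real.exp_nat_mul, ← Real.exp_nat_mul, ← hexp]
  field_simp

theorem mul_sqrt_measureReal_le_sqrt_integral_of_isMaxOn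
    {μ : Measure (EuclideanSpace ℂ (Fin n))} [IsFiniteMeasure μ]
    {K E : Set (EuclideanSpace ℂ (Fin n))} {Q : EuclideanSpace ℂ (Fin n) → ℝ}
    {p : MvPolynomial (Fin n) ℂ} {k : ℕ} {z₀ : EuclideanSpace ℂ (Fin n)} {η δ R r : ℝ}
    (hK : IsCompact K) (hQc : ContinuousOn Q K) (hp : p.totalDegree ≤ k) (hη : 0 ≤ η)
    (hmax : IsMaxOn (fun z => ‖MvPolynomial.eval (fun i => z i) p‖ * Real.exp (-Q z) ^ k) K z₀)
    (hQ : ∀ y ∈ K, dist y z₀ < δ → Q y ≤ Q z₀ + η)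
    (hEK : E ⊆ K ∩ ball z₀ δ) (hz₀E : z₀ ∈ E) (hE : ∀ z, BddAbove (extremalSet E z))
    (hV : ∀ w ∈ ball z₀ R, extremalFunction E w ≤ η) (hrδ : r ≤ δ)
    (hrR : r ≤ R * Real.exp (-(2 * k * η)) / 4) :
    ‖MvPolynomial.eval (fun i => z₀ i) p‖ / 2 * Real.exp (-(Q z₀ + η)) ^ k *
        √(μ.real (K ∩ ball z₀ r)) ≤
      √(∫ w in K, ‖MvPolynomial.eval (fun i => w i) p‖ ^ 2 * Real.exp (-Q w) ^ (2 * k) ∂μ) := by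
  have hcont : ContinuousOn (fun w => ‖MvPolynomial.eval (fun i => w i) p‖ ^ 2 *
      Real.exp (-Q w) ^ (2 * k)) K :=
    ((MvPolynomial.differentiable_eval_euclideanSpace p).continuous.norm.pow 2).continuousOn.mul
      ((Real.continuous_exp.comp_continuousOn hQc.neg).pow (2 * k))
  refine mul_sqrt_measureReal_le_sqrt_setIntegral hK.isClosed.measurableSet
    (hK.isClosed.measurableSet.inter measurableSet_ball) Set.inter_subset_left
    (measure_ne_top μ _) (hcont.integrableOn_compact hK) (fun _ _ => by positivity)
    (by positivity) fun u ⟨hu, hur⟩ => ?_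
  rw [mem_ball] at hur
  rw [pow_mul', ← mul_pow]
  gcongr ?_ ^ 2
  exact half_mul_exp_le_of_isMaxOn hp hη hmax hQ hEK hz₀E hE hV hu (hur.trans_le hrδ)
    (hur.trans_le hrR)

theorem norm_eval_mul_exp_le_of_uniform_regular_slices {μ : Measure (EuclideanSpace ℂ (Fin n))}
    [IsFiniteMeasure μ] {K : Set (EuclideanSpace ℂ (Fin n))}
    (hsupp : ∀ z, z ∈ K ↔ ∀ r : ℝ, 0 < r → 0 < μ (ball z r)) (hK : IsCompact K) {r₀ T : ℝ}
    (hmass : ∀ z ∈ K, ∀ r : ℝ, 0 < r → r < r₀ → ENNReal.ofReal (r ^ T) ≤ μ (ball z r))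
    {Q : EuclideanSpace ℂ (Fin n) → ℝ} (hQc : ContinuousOn Q K) {η δ R β : ℝ} (hη : 0 ≤ η)
    (hQ : ∀ x ∈ K, ∀ y ∈ K, dist x y < δ → Q x ≤ Q y + η)
    (hslices : ∀ x ∈ K, ∃ E ⊆ K ∩ ball x δ, x ∈ E ∧ RegularSet E ∧
      ∀ w ∈ ball x R, extremalFunction E w < η)
    (hβ : 0 < β) (hβR : β ≤ R / 4) (hβr₀ : β < r₀) (hβδ : β ≤ δ)
    {p : MvPolynomial (Fin n) ℂ} {k : ℕ} (hp : p.totalDegree ≤ k) {z : EuclideanSpace ℂ (Fin n)}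
    (hz : z ∈ K) :
    ‖MvPolynomial.eval (fun i => z i) p‖ * Real.exp (-Q z) ^ k ≤
      2 / √(β ^ T) * Real.exp (η * (1 + T)) ^ k *
        √(∫ w in K, ‖MvPolynomial.eval (fun i => w i) p‖ ^ 2 * Real.exp (-Q w) ^ (2 * k) ∂μ) := by
  obtain ⟨z₀, hz₀, hmax⟩ : ∃ z₀ ∈ K, IsMaxOn (fun z =>
      ‖MvPolynomial.eval (fun i => z i) p‖ * Real.exp (-Q z) ^ k) K z₀ :=
    hK.exists_isMaxOn ⟨z, hz⟩ ((MvPolynomial.differentiable_eval_euclideanSpace p).continuous.norm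
      |>.continuousOn.mul ((Real.continuous_exp.comp_continuousOn hQc.neg).pow k))
  obtain ⟨E, hEK, hz₀E, hE, hV⟩ := hslices z₀ hz₀
  set r := β * Real.exp (-(2 * k * η))
  have hrβ : r ≤ β := mul_le_of_le_one_right hβ.le
    (Real.exp_le_one_iff.mpr (by simp only [neg_nonpos]; positivity))
  calc ‖MvPolynomial.eval (fun i => z i) p‖ * Real.exp (-Q z) ^ k
      ≤ ‖MvPolynomial.eval (fun i => z₀ i) p‖ * Real.exp (-Q z₀) ^ k := hmax hz
    _ = 2 / √(β ^ T) * Real.exp (η * (1 + T)) ^ k *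
        (‖MvPolynomial.eval (fun i => z₀ i) p‖ / 2 * Real.exp (-(Q z₀ + η)) ^ k * √(r ^ T)) :=
      (two_div_sqrt_rpow_mul_pow_mul_eq k hβ).symm
    _ ≤ 2 / √(β ^ T) * Real.exp (η * (1 + T)) ^ k * (‖MvPolynomial.eval (fun i => z₀ i) p‖ / 2 *
        Real.exp (-(Q z₀ + η)) ^ k * √(μ.real (K ∩ ball z₀ r))) := by
      gcongr
      exact rpow_le_measureReal_inter_ball hsupp
        (hmass z₀ hz₀ r (by positivity) (hrβ.trans_lt hβr₀))
    _ ≤ _ := by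
      gcongr
      refine mul_sqrt_measureReal_le_sqrt_integral_of_isMaxOn hK hQc hp hη hmax
        (fun y hy hyz₀ => hQ y hy z₀ hz₀ hyz₀) hEK hz₀E hE.1 (fun w hw => (hV w hw).le)
        (hrβ.trans hβδ) ?_
      rw [mul_div_right_comm]
      exact mul_le_mul_of_nonneg_right hβR (Real.exp_pos _).le

/-- Let `μ` be a finite measure whose support `K` is compact and such that every small
closed-ball slice `K ∩ B̄(z,r)` is regular.  If `μ` satisfies the mass density condition
`μ(B(z,r)) ≥ r^T` for `z ∈ K`, `0 < r < r₀`, then `μ` is a strong Bernstein–Markov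
measure for `K`: for every continuous `Q : K → ℝ` the triple `(K, μ, Q)` satisfies the
weighted Bernstein–Markov property. -/
theorem mass_density_implies_strong_bernstein_markov
    (μ : Measure (EuclideanSpace ℂ (Fin n))) [IsFiniteMeasure μ]
    (K : Set (EuclideanSpace ℂ (Fin n)))
    (hsupp : ∀ z, z ∈ K ↔ ∀ r : ℝ, 0 < r → 0 < μ (Metric.ball z r))
    (hKc : IsCompact K)
    (hloc : ∀ z ∈ K, ∃ ρ : ℝ, 0 < ρ ∧ ∀ r : ℝ, 0 < r → r ≤ ρ →
      RegularSet (K ∩ Metric.closedBall z r))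
    (r₀ T : ℝ) (hr₀ : 0 < r₀) (hT : 0 < T)
    (hmass : ∀ z ∈ K, ∀ r : ℝ, 0 < r → r < r₀ →
      ENNReal.ofReal (r ^ T) ≤ μ (Metric.ball z r)) :
    ∀ Q : EuclideanSpace ℂ (Fin n) → ℝ, ContinuousOn Q K →
      WeightedBernsteinMarkov K μ Q := by
  intro Q hQ ε hε
  set η := Real.log (1 + ε) / (1 + T)
  have hη : 0 < η := div_pos (Real.log_pos (by linarith)) (by linarith)
  obtain ⟨δ, hδ, hQδ⟩ := Metric.uniformContinuousOn_iff.mp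
    (hKc.uniformContinuousOn_of_continuous hQ) η hη
  obtain ⟨R, hR, hslices⟩ := exists_uniform_regular_slices hKc hloc hδ hη
  set β := min (R / 4) (min (r₀ / 2) δ)
  have hβ : 0 < β := by positivity
  refine ⟨2 / √(β ^ T), by positivity, fun k _ p hp z hz => ?_⟩
  -- `1 + ε = e^{η (1 + T)}`
  rw [← Real.exp_log (by linarith : 0 < 1 + ε), ← div_mul_cancel₀ (Real.log (1 + ε))
    (by linarith : 1 + T ≠ 0)]
  refine norm_eval_mul_exp_le_of_uniform_regular_slices hsupp hKc hmass hQ hη.le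
    (fun x hx y hy hxy => ?_) hslices hβ (min_le_left _ _) ?_
    ((min_le_right _ _).trans (min_le_right _ _)) hp hz
  · linarith [(abs_sub_lt_iff.mp (Real.dist_eq _ _ ▸ hQδ x hx y hy hxy)).1]
  · linarith [min_le_right (R / 4) (min (r₀ / 2) δ), min_le_left (r₀ / 2) δ]
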